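/- arXiv:1706.00671 — 5 statements merged into one kernel-verified Lean document; each statement's English description precedes it below -/
import Mathlib

section
/- Let H, A : ℝ² → ℝ² with H continuous and A a linear isomorphism, such that H(u+m, v+n) = H(u,v) + A(m,n) for all (u,v) ∈ ℝ² and (m,n) ∈ ℤ². Suppose there exist irrational numbers λ, λ̃ ∈ ℝ such that H maps each line {(u,v) : v − λu = c} into a line of the form {(u,v) : v − λ̃u = c'}. Then A(1, λ) is a nonzero scalar multiple of (1, λ̃). -/
/-- If `H : ℝ² → ℝ²` is continuous, `A` is a linear isomorphism, `H` is `A`-equivariant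
with respect to integer translations, and `H` maps lines of slope `λ` into lines of
slope `λ̃` (both irrational), then `A (1, λ)` is a nonzero multiple of `(1, λ̃)`. -/
theorem stmt0 (H : ℝ × ℝ → ℝ × ℝ) (A : (ℝ × ℝ) ≃ₗ[ℝ] (ℝ × ℝ))
    (hH : Continuous H)
    (hequiv : ∀ (u v : ℝ) (m n : ℤ), H (u + m, v + n) = H (u, v) + A (m, n))
    (lam lamt : ℝ) (hlam : Irrational lam) (hlamt : Irrational lamt)
    (hmaps : ∀ c : ℝ, ∃ c' : ℝ, ∀ u v : ℝ, v - lam * u = c →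
      (H (u, v)).2 - lamt * (H (u, v)).1 = c') :
    ∃ r : ℝ, r ≠ 0 ∧ A (1, lam) = r • ((1 : ℝ), lamt) := by
  set g : ℝ → ℝ := fun t => (H (0, t)).2 - lamt * (H (0, t)).1 with hgdef
  have hg : Continuous g := by
    have h1 : Continuous fun t : ℝ => H (0, t) := by
      apply hH.comp; exact (continuous_const.prodMk continuous_id)
    exact (h1.snd).sub (continuous_const.mul h1.fst)
  -- key identity
  have key : ∀ m n : ℤ, ((A ((m : ℝ), (n : ℝ))).2 - lamt * (A ((m : ℝ), (n : ℝ))).1)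
      = g ((n : ℝ) - lam * m) - g 0 := by
    intro m n
    obtain ⟨c', hc'⟩ := hmaps ((n : ℝ) - lam * m)
    have h1 : g ((n : ℝ) - lam * m) = c' := hc' 0 ((n : ℝ) - lam * m) (by ring)
    have h2 := hc' (m : ℝ) (n : ℝ) rfl
    have h3 : H ((m : ℝ), (n : ℝ)) = H (0, 0) + A ((m : ℝ), (n : ℝ)) := by
      have := hequiv 0 0 m n; simpa using this
    rw [h3] at h2
    have hg0 : g 0 = (H (0, 0)).2 - lamt * (H (0, 0)).1 := rfl
    simp only [Prod.snd_add, Prod.fst_add] at h2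
    rw [h1, hg0]; linarith
  set a : ℝ := (A (1, lam)).2 - lamt * (A (1, lam)).1 with hadef
  set b : ℝ := (A (0, 1)).2 - lamt * (A (0, 1)).1 with hbdef
  have eq1 : ∀ m n : ℤ, (m : ℝ) * a + ((n : ℝ) - lam * m) * b
      = g ((n : ℝ) - lam * m) - g 0 := by
    intro m n
    have lin : (A ((m : ℝ), (n : ℝ)) : ℝ × ℝ)
        = (m : ℝ) • A (1, lam) + ((n : ℝ) - lam * m) • A (0, 1) := by
      rw [← map_smul, ← map_smul, ← map_add]
      congr 1
      simp [Prod.ext_iff, Prod.smul_mk]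
      ring
    have := key m n
    rw [lin] at this
    simp only [Prod.snd_add, Prod.fst_add, Prod.smul_snd, Prod.smul_fst, smul_eq_mul] at this
    rw [hadef, hbdef]; linarith
  -- boundedness of g on [-1,1]
  obtain ⟨C, hC⟩ := (isCompact_Icc (a := (-1 : ℝ)) (b := 1)).exists_bound_of_continuousOn
    hg.continuousOn
  have hC0 : 0 ≤ C := le_trans (norm_nonneg _) (hC 0 (by norm_num))
  -- a = 0
  have ha : a = 0 := by
    by_contra ha
    have hapos : 0 < |a| := abs_pos.mpr ha
    obtain ⟨m, hm⟩ := exists_nat_gt ((2 * C + |b|) / |a|)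
    set n : ℤ := ⌊lam * m⌋ with hn
    have ht1 : (n : ℝ) - lam * m ∈ Set.Icc (-1 : ℝ) 1 := by
      constructor
      · have := Int.lt_floor_add_one (lam * m); linarith
      · have := Int.floor_le (lam * m); linarith
    have heq := eq1 (m : ℤ) n
    push_cast at heq
    have hb1 : |g ((n : ℝ) - lam * m)| ≤ C := by
      simpa [Real.norm_eq_abs] using hC _ ht1
    have hb2 : |g 0| ≤ C := by
      simpa [Real.norm_eq_abs] using hC 0 (by norm_num)
    have hb3 : |((n : ℝ) - lam * m) * b| ≤ |b| := by
      rw [abs_mul]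
      have : |(n : ℝ) - lam * m| ≤ 1 := abs_le.mpr ⟨ht1.1, ht1.2⟩
      nlinarith [abs_nonneg b]
    have hbound : |(m : ℝ) * a| ≤ 2 * C + |b| := by
      have : (m : ℝ) * a = (g ((n : ℝ) - lam * m) - g 0) - ((n : ℝ) - lam * m) * b := by
        linarith
      rw [this]
      calc |(g ((n : ℝ) - lam * m) - g 0) - ((n : ℝ) - lam * m) * b|
          ≤ |g ((n : ℝ) - lam * m) - g 0| + |((n : ℝ) - lam * m) * b| := abs_sub _ _
        _ ≤ (|g ((n : ℝ) - lam * m)| + |g 0|) + |b| := by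
            have := abs_sub (g ((n : ℝ) - lam * m)) (g 0); linarith
        _ ≤ 2 * C + |b| := by linarith
    rw [abs_mul, abs_of_nonneg (by positivity : (0:ℝ) ≤ (m:ℝ))] at hbound
    have : (2 * C + |b|) / |a| < (m : ℝ) := hm
    have h2 : 2 * C + |b| < (m : ℝ) * |a| := by
      rw [div_lt_iff₀ hapos] at this; linarith
    linarith
  -- conclude
  refine ⟨(A (1, lam)).1, ?_, ?_⟩
  · intro hp
    have hsnd : (A (1, lam)).2 = 0 := by rw [hadef] at ha; rw [hp] at ha; linarith
    have hz : A (1, lam) = 0 := Prod.ext hp hsnd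
    have : ((1 : ℝ), lam) = (0 : ℝ × ℝ) := by
      have h0 : A ((1 : ℝ), lam) = A 0 := by simpa using hz
      exact A.injective h0
    exact one_ne_zero (congrArg Prod.fst this)
  · have hsnd : (A (1, lam)).2 = lamt * (A (1, lam)).1 := by
      rw [hadef] at ha; linarith
    apply Prod.ext
    · simp
    · simp [hsnd, mul_comm]
end

section
/- Let H, A : ℝ² → ℝ² with H continuous, A a linear isomorphism, and H(u+m, v+n) = H(u,v) + A(m,n) for all (u,v) ∈ ℝ², (m,n) ∈ ℤ². Suppose λ, λ̃ are irrational and H maps lines of slope λ into lines of slope λ̃. Then there exists a continuous function κ : ℝ² → ℝ such that H(u,v) = H(0,0) + A(u,v) + κ(u,v)·(1, λ̃) for all (u,v). -/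
/-!
Apply the functional `φ (x, y) = y - λ̃ x`, which kills exactly the direction `(1, λ̃)`; it
suffices to show `φ ∘ H = φ (H 0) + φ ∘ A`. The map `f = φ ∘ H` is constant on the lines of
slope `λ`, so `f (u, v) = g (v - λ u)` with `g c = f (0, c)`, and equivariance says that the
increments of `g` along `1` and along `λ` do not depend on the base point. The translations
with base-point independent increments form a subgroup of `ℝ`, which contains the dense group
`ℤ + λℤ`, so by continuity every increment is independent of the base point. Hence `g - g 0`
is continuous and additive, i.e. linear, and comparing slopes gives the claim.
-/

def constIncrementSubgroup (g : ℝ → ℝ) : AddSubgroup ℝ where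
  carrier := {t | ∀ c, g (c + t) - g c = g t - g 0}
  zero_mem' := by simp
  add_mem' {s t} hs ht c := by
    have h₁ : g (c + s + t) - g (c + s) = g t - g 0 := ht (c + s)
    have h₂ : g (s + t) - g s = g t - g 0 := ht s
    have h₃ : g (c + s) - g c = g s - g 0 := hs c
    rw [← add_assoc]
    linarith
  neg_mem' {t} ht c := by
    have h₁ : g (c + -t + t) - g (c + -t) = g t - g 0 := ht (c + -t)
    have h₂ : g (-t + t) - g (-t) = g t - g 0 := ht (-t)
    rw [neg_add_cancel_right] at h₁
    rw [neg_add_cancel] at h₂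
    linarith

theorem Continuous.eq_add_mul_of_sub_eq {g : ℝ → ℝ} (hg : Continuous g) {lam a b : ℝ}
    (hlam : Irrational lam) (h₁ : ∀ c, g (c + 1) - g c = a)
    (hlam' : ∀ c, g (c + lam) - g c = b) (t : ℝ) :
    g t = g 0 + a * t := by
  have ha : g 1 - g 0 = a := by simpa using h₁ 0
  have hclosure : AddSubgroup.closure {lam, 1} ≤ constIncrementSubgroup g := by
    rw [AddSubgroup.closure_le, Set.insert_subset_iff, Set.singleton_subset_iff]
    refine ⟨fun c => ?_, fun c => ?_⟩
    · rw [hlam' c]; simpa using (hlam' 0).symm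
    · rw [h₁ c, ha]
  have hincr : ∀ c s, g (c + s) - g c = g s - g 0 := fun c =>
    congrFun <| Continuous.ext_on (dense_addSubgroupClosure_pair_iff.2 (by simpa using hlam))
      (by fun_prop) (by fun_prop) fun s hs => hclosure hs c
  let ψ : ℝ →+ ℝ := AddMonoidHom.mk' (fun s => g s - g 0) fun s s' => by
    linarith [hincr s s']
  have hψ : g t - g 0 = t * (g 1 - g 0) := by
    simpa [ψ] using map_real_smul ψ (hg.sub continuous_const) t 1
  rw [ha] at hψ
  linarith

theorem apply_eq_apply_zero_add_of_irrational_lines {f : ℝ × ℝ → ℝ} (hf : Continuous f)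
    (ℓ : ℝ × ℝ →ₗ[ℝ] ℝ) {lam : ℝ} (hlam : Irrational lam)
    (hline : ∀ u v, f (u, v) = f (0, v - lam * u))
    (hperiod : ∀ (u v : ℝ) (m n : ℤ), f (u + m, v + n) = f (u, v) + ℓ (m, n)) (w : ℝ × ℝ) :
    f w = f (0, 0) + ℓ w := by
  have h₁ (c : ℝ) : f (0, c + 1) - f (0, c) = ℓ (0, 1) := by
    simpa using sub_eq_of_eq_add' (hperiod 0 c 0 1)
  have hlam' (c : ℝ) : f (0, c + lam) - f (0, c) = -ℓ (1, 0) := by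
    have h := hperiod (-1) c 1 0
    rw [hline (-1) c, show c - lam * -1 = c + lam by ring] at h
    norm_num at h
    linarith
  have haffine : ∀ t, f (0, t) = f (0, 0) + ℓ (0, 1) * t :=
    (hf.comp (Continuous.prodMk_right 0)).eq_add_mul_of_sub_eq hlam h₁ hlam'
  have hslope : -ℓ (1, 0) = ℓ (0, 1) * lam := by
    have := hlam' 0
    rw [zero_add, haffine] at this
    linarith
  obtain ⟨u, v⟩ := w
  have hℓ : ℓ (u, v) = u * ℓ (1, 0) + v * ℓ (0, 1) := by
    have : ((u, v) : ℝ × ℝ) = u • (1, 0) + v • (0, 1) := by simp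
    rw [this, map_add, map_smul, map_smul, smul_eq_mul, smul_eq_mul]
  rw [hline, haffine, hℓ]
  linear_combination u * hslope

theorem stmt1_general (H : ℝ × ℝ → ℝ × ℝ) (A : (ℝ × ℝ) ≃ₗ[ℝ] (ℝ × ℝ))
    (hH : Continuous H)
    (hequiv : ∀ (u v : ℝ) (m n : ℤ), H (u + m, v + n) = H (u, v) + A (m, n))
    (lam lamt : ℝ) (hlam : Irrational lam)
    (hmaps : ∀ c : ℝ, ∃ c' : ℝ, ∀ u v : ℝ, v - lam * u = c →
      (H (u, v)).2 - lamt * (H (u, v)).1 = c') :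
    ∃ κ : ℝ × ℝ → ℝ, Continuous κ ∧
      ∀ w : ℝ × ℝ, H w = H (0, 0) + A w + κ w • ((1 : ℝ), lamt) := by
  let φ : ℝ × ℝ →L[ℝ] ℝ := ContinuousLinearMap.snd ℝ ℝ ℝ - lamt • ContinuousLinearMap.fst ℝ ℝ ℝ
  have hφ (x : ℝ × ℝ) : φ x = x.2 - lamt * x.1 := rfl
  have hline (u v : ℝ) : φ (H (u, v)) = φ (H (0, v - lam * u)) := by
    obtain ⟨c', hc'⟩ := hmaps (v - lam * u)
    rw [hφ, hφ, hc' u v rfl, hc' 0 _ (by ring)]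
  have hperiod (u v : ℝ) (m n : ℤ) :
      φ (H (u + m, v + n)) = φ (H (u, v)) + (φ.toLinearMap ∘ₗ A.toLinearMap) (m, n) := by
    rw [hequiv, map_add]; rfl
  have hφH :=
    apply_eq_apply_zero_add_of_irrational_lines (φ.continuous.comp hH) _ hlam hline hperiod
  have hA : Continuous A := A.toLinearMap.continuous_of_finiteDimensional
  refine ⟨fun w => (H w - H (0, 0) - A w).1, by fun_prop, fun w => ?_⟩
  have hker := hφH w
  simp only [Function.comp_apply, LinearMap.coe_comp, ContinuousLinearMap.coe_coe,
    LinearEquiv.coe_coe, hφ] at hker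
  ext
  · simp
  · simp only [Prod.snd_add, Prod.fst_sub, Prod.smul_mk, smul_eq_mul]
    linarith

/-- Under the same hypotheses as the dynamical lemma, there is a continuous
`κ : ℝ² → ℝ` with `H w = H 0 + A w + κ w • (1, λ̃)`. -/
theorem stmt1 (H : ℝ × ℝ → ℝ × ℝ) (A : (ℝ × ℝ) ≃ₗ[ℝ] (ℝ × ℝ))
    (hH : Continuous H)
    (hequiv : ∀ (u v : ℝ) (m n : ℤ), H (u + m, v + n) = H (u, v) + A (m, n))
    (lam lamt : ℝ) (hlam : Irrational lam) (hlamt : Irrational lamt)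
    (hmaps : ∀ c : ℝ, ∃ c' : ℝ, ∀ u v : ℝ, v - lam * u = c →
      (H (u, v)).2 - lamt * (H (u, v)).1 = c') :
    ∃ κ : ℝ × ℝ → ℝ, Continuous κ ∧
      ∀ w : ℝ × ℝ, H w = H (0, 0) + A w + κ w • ((1 : ℝ), lamt) :=
  stmt1_general H A hH hequiv lam lamt hlam hmaps
end

section
/- Let H, A : ℝ² → ℝ² satisfy: H continuous, A linear with matrix ((a,b),(c,d)) in the standard basis, H(u+m,v+n) = H(u,v) + A(m,n) for all integer (m,n), and H maps lines of slope λ into lines of slope λ̃, where λ, λ̃ are irrational. Then a + bλ ≠ 0 and λ̃ = (c + dλ)/(a + bλ). -/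
/-!
Compose `H` with the linear form `ℓ(x, y) = y - λ̃ x`. Since `H` maps lines of slope `λ` into
lines of slope `λ̃`, the function `ℓ ∘ H` only depends on `v - λu`, say `ℓ ∘ H (u, v) = g (v - λu)`,
and equivariance gives `g (n - λm) = g 0 + ℓ (A (m, n))` on the lattice. After subtracting the
linear part in `n`, the continuous function `s ↦ g s - ℓ (A (0, 1)) s` grows like
`ℓ (A (1, λ)) m` along points `n - λm` that can be kept in `[0, 1]`, so compactness forces
`ℓ (A (1, λ)) = 0`, i.e. `A (1, λ)` has slope `λ̃`; invertibility of `A` makes `a + bλ ≠ 0`.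
-/

theorem eq_zero_of_forall_abs_add_mul_le {x γ M : ℝ} (h : ∀ k : ℕ, |x + γ * k| ≤ M) :
    γ = 0 := by
  by_contra hγ
  have hγpos : 0 < |γ| := abs_pos.2 hγ
  obtain ⟨k, hk⟩ := exists_nat_gt ((M + |x|) / |γ|)
  rw [div_lt_iff₀ hγpos] at hk
  have : |γ| * k ≤ M + |x| :=
    calc |γ| * k = |(x + γ * k) - x| := by simp [abs_mul]
      _ ≤ |x + γ * k| + |x| := abs_sub _ _
      _ ≤ M + |x| := by linarith [h k]
  linarith

theorem eq_zero_of_continuous_of_apply_int_sub_mul {h : ℝ → ℝ} (hh : Continuous h) {lam γ : ℝ}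
    (hjump : ∀ m n : ℤ, h (n - lam * m) = h 0 + γ * m) : γ = 0 := by
  obtain ⟨M, hM⟩ := (isCompact_Icc (a := (0 : ℝ)) (b := 1)).exists_bound_of_continuousOn
    hh.continuousOn
  refine eq_zero_of_forall_abs_add_mul_le (x := h 0) (M := M) fun k => ?_
  have hmem : (⌈lam * k⌉ : ℝ) - lam * k ∈ Set.Icc (0 : ℝ) 1 :=
    ⟨by linarith [Int.le_ceil (lam * k)], by linarith [Int.ceil_lt_add_one (lam * k)]⟩
  have hk := hjump k ⌈lam * k⌉
  push_cast at hk
  simpa only [hk, Real.norm_eq_abs] using hM _ hmem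

theorem apply_eq_apply_zero_sub_of_const_on_lines {F : ℝ × ℝ → ℝ} {lam : ℝ}
    (hF : ∀ cst : ℝ, ∃ cst' : ℝ, ∀ u v : ℝ, v - lam * u = cst → F (u, v) = cst') (u v : ℝ) :
    F (u, v) = F (0, v - lam * u) := by
  obtain ⟨cst', hcst'⟩ := hF (v - lam * u)
  rw [hcst' u v rfl, hcst' 0 (v - lam * u) (by ring)]

theorem ne_zero_and_eq_div_of_det_ne_zero {a b c d lam lamt : ℝ} (hA : a * d - b * c ≠ 0)
    (hslope : c + d * lam = lamt * (a + b * lam)) :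
    a + b * lam ≠ 0 ∧ lamt = (c + d * lam) / (a + b * lam) := by
  have hne : a + b * lam ≠ 0 := by
    intro h0
    apply hA
    have ha : a = -b * lam := by linarith
    have hc : c = -d * lam := by rw [h0, mul_zero] at hslope; linarith
    rw [ha, hc]; ring
  exact ⟨hne, by rw [hslope, mul_div_cancel_right₀ _ hne]⟩

theorem stmt2_general (H : ℝ × ℝ → ℝ × ℝ) (a b c d : ℝ)
    (hH : Continuous H)
    (hA : a * d - b * c ≠ 0)
    (hequiv : ∀ (u v : ℝ) (m n : ℤ),
      H (u + m, v + n) = H (u, v) + (a * m + b * n, c * m + d * n))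
    (lam lamt : ℝ)
    (hmaps : ∀ cst : ℝ, ∃ cst' : ℝ, ∀ u v : ℝ, v - lam * u = cst →
      (H (u, v)).2 - lamt * (H (u, v)).1 = cst') :
    a + b * lam ≠ 0 ∧ lamt = (c + d * lam) / (a + b * lam) := by
  set F : ℝ × ℝ → ℝ := fun p => (H p).2 - lamt * (H p).1 with hF
  have hF_lattice : ∀ m n : ℤ,
      F (m, n) = F (0, 0) + ((c - lamt * a) * m + (d - lamt * b) * n) := by
    intro m n
    have hshift := hequiv 0 0 m n
    simp only [zero_add] at hshift
    simp only [hF, hshift, Prod.fst_add, Prod.snd_add]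
    ring
  set h : ℝ → ℝ := fun s => F (0, s) - (d - lamt * b) * s
  have hh : Continuous h := by fun_prop
  have hjump : ∀ m n : ℤ,
      h (n - lam * m) = h 0 + ((c - lamt * a) + (d - lamt * b) * lam) * m := by
    intro m n
    have hline : F (m, n) = F (0, n - lam * m) :=
      apply_eq_apply_zero_sub_of_const_on_lines hmaps m n
    simp only [h, ← hline, hF_lattice]
    ring
  have hγ := eq_zero_of_continuous_of_apply_int_sub_mul hh hjump
  exact ne_zero_and_eq_div_of_det_ne_zero hA (by linear_combination hγ)

/-- If `A` has matrix `((a,b),(c,d))`, then `a + bλ ≠ 0` and `λ̃ = (c + dλ)/(a + bλ)`. -/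
theorem stmt2 (H : ℝ × ℝ → ℝ × ℝ) (a b c d : ℝ)
    (hH : Continuous H)
    (hA : a * d - b * c ≠ 0)
    (hequiv : ∀ (u v : ℝ) (m n : ℤ),
      H (u + m, v + n) = H (u, v) + (a * m + b * n, c * m + d * n))
    (lam lamt : ℝ) (hlam : Irrational lam) (hlamt : Irrational lamt)
    (hmaps : ∀ cst : ℝ, ∃ cst' : ℝ, ∀ u v : ℝ, v - lam * u = cst →
      (H (u, v)).2 - lamt * (H (u, v)).1 = cst') :
    a + b * lam ≠ 0 ∧ lamt = (c + d * lam) / (a + b * lam) :=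
  stmt2_general H a b c d hH hA hequiv lam lamt hmaps
end

section
/- Let a, b, c, d be integers with ad − bc = 1. Suppose that for every rational number n/m (m, n positive coprime integers) in some open interval I ⊆ (0,∞), one has (cm + dn)/(am + bn) = n/m or (cm + dn)/(am + bn) = m/n. Then either (b = c = 0 and a = d) or (a = d = 0 and b = c). -/
open Polynomial

private lemma coeff_intCast' (i : ℤ) (n : ℕ) :
    ((i : ℝ[X])).coeff n = if n = 0 then (i : ℝ) else 0 := by
  rw [← Polynomial.C_eq_intCast, Polynomial.coeff_C]

private lemma inj5 {x0 x1 x2 x3 x4 : ℝ} (h01 : x0 < x1) (h12 : x1 < x2)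
    (h23 : x2 < x3) (h34 : x3 < x4) :
    Function.Injective (![x0, x1, x2, x3, x4] : Fin 5 → ℝ) := by
  intro i j hij
  fin_cases i <;> fin_cases j <;> simp_all <;> linarith

private lemma rat_root (a b c d : ℤ) (q : ℚ) (hq0 : 0 < q)
    (h : ((c : ℝ) * q.den + d * q.num) / ((a : ℝ) * q.den + b * q.num) = (q.num : ℝ) / q.den ∨
         ((c : ℝ) * q.den + d * q.num) / ((a : ℝ) * q.den + b * q.num) = (q.den : ℝ) / q.num) :
    ((c : ℝ) + ((d : ℝ) - a) * q - b * q ^ 2 = 0) ∨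
    ((a : ℝ) + ((b : ℝ) - c) * q - d * q ^ 2 = 0) := by
  have hMpos : (0 : ℝ) < (q.den : ℝ) := by exact_mod_cast q.pos
  have hNpos : (0 : ℝ) < (q.num : ℝ) := by exact_mod_cast Rat.num_pos.mpr hq0
  have hM0 : (q.den : ℝ) ≠ 0 := ne_of_gt hMpos
  have hN0 : (q.num : ℝ) ≠ 0 := ne_of_gt hNpos
  have hqval : (q : ℝ) = (q.num : ℝ) / (q.den : ℝ) := Rat.cast_def q
  have hden : ((a : ℝ) * q.den + b * q.num) ≠ 0 := by
    intro h0
    have hNM : (0 : ℝ) < (q.num : ℝ) / q.den := by positivity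
    have hMN : (0 : ℝ) < (q.den : ℝ) / q.num := by positivity
    rw [h0, div_zero] at h
    rcases h with h | h <;> linarith [h.symm]
  rcases h with h | h
  · left
    have e := (div_eq_div_iff hden hM0).mp h
    have key2 : ((c:ℝ) + ((d:ℝ)-a) * ((q.num:ℝ)/q.den) - b * ((q.num:ℝ)/q.den)^2) * (q.den:ℝ)^2 = 0 := by
      have expand : ((c:ℝ) + ((d:ℝ)-a) * ((q.num:ℝ)/q.den) - b * ((q.num:ℝ)/q.den)^2) * (q.den:ℝ)^2
          = ((c:ℝ)*q.den + d*q.num)*q.den - (q.num:ℝ)*((a:ℝ)*q.den + b*q.num) := by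
        field_simp
        ring
      rw [expand, e, sub_self]
    rw [hqval]
    exact (mul_eq_zero.mp key2).resolve_right (pow_ne_zero 2 hM0)
  · right
    have e := (div_eq_div_iff hden hN0).mp h
    have key2 : ((a:ℝ) + ((b:ℝ)-c) * ((q.num:ℝ)/q.den) - d * ((q.num:ℝ)/q.den)^2) * (q.den:ℝ)^2 = 0 := by
      have expand : ((a:ℝ) + ((b:ℝ)-c) * ((q.num:ℝ)/q.den) - d * ((q.num:ℝ)/q.den)^2) * (q.den:ℝ)^2
          = (q.den:ℝ)*((a:ℝ)*q.den + b*q.num) - ((c:ℝ)*q.den + d*q.num)*q.num := by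
        field_simp
        ring
      rw [expand, e, sub_self]
    rw [hqval]
    exact (mul_eq_zero.mp key2).resolve_right (pow_ne_zero 2 hM0)

/-- If an `SL(2,ℤ)` matrix `((a,b),(c,d))` satisfies
`(cm+dn)/(am+bn) ∈ {n/m, m/n}` for every positive coprime pair `(m,n)` with `n/m`
in some nonempty open interval `I ⊆ (0,∞)`, then the matrix is diagonal with `a = d`
or antidiagonal with `b = c`. -/
theorem stmt8 (a b c d : ℤ) (hdet : a * d - b * c = 1)
    (I : Set ℝ) (hIopen : IsOpen I) (hInonempty : I.Nonempty) (hIsub : I ⊆ Set.Ioi 0)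
    (hyp : ∀ m n : ℤ, 0 < m → 0 < n → IsCoprime m n → (n : ℝ) / m ∈ I →
      ((c * m + d * n : ℝ) / (a * m + b * n) = (n : ℝ) / m ∨
       (c * m + d * n : ℝ) / (a * m + b * n) = (m : ℝ) / n)) :
    (c = 0 ∧ b = 0 ∧ a = d) ∨ (a = 0 ∧ d = 0 ∧ c = b) := by
  set P : ℝ[X] := C (c:ℝ) + C ((d:ℝ)-a) * X - C (b:ℝ) * X^2 with hP
  set Q : ℝ[X] := C (a:ℝ) + C ((b:ℝ)-c) * X - C (d:ℝ) * X^2 with hQ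
  -- every rational in I is a root of P*Q
  have key : ∀ q : ℚ, (q:ℝ) ∈ I → (P*Q).eval (q:ℝ) = 0 := by
    intro q hq
    have hqpos : (0:ℝ) < (q:ℝ) := hIsub hq
    have hq0 : 0 < q := by exact_mod_cast hqpos
    have hm : (0:ℤ) < (q.den : ℤ) := by exact_mod_cast q.pos
    have hn : (0:ℤ) < q.num := Rat.num_pos.mpr hq0
    have hcop : IsCoprime (q.den : ℤ) q.num := by
      rw [Int.isCoprime_iff_gcd_eq_one]
      simpa [Int.gcd] using (Nat.coprime_comm.mp q.reduced)
    have hmem : ((q.num : ℤ) : ℝ) / ((q.den : ℤ) : ℝ) ∈ I := by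
      have : ((q.num : ℤ) : ℝ) / ((q.den : ℤ) : ℝ) = (q : ℝ) := by
        push_cast
        rw [Rat.cast_def]
      rw [this]; exact hq
    have h := hyp q.den q.num hm hn hcop hmem
    push_cast at h
    have := rat_root a b c d q hq0 h
    rw [eval_mul]
    rcases this with h' | h'
    · apply mul_eq_zero_of_left
      simp only [hP, eval_sub, eval_add, eval_mul, eval_C, eval_X, eval_pow]
      linear_combination h'
    · apply mul_eq_zero_of_right
      simp only [hQ, eval_sub, eval_add, eval_mul, eval_C, eval_X, eval_pow]
      linear_combination h'
  -- find 5 distinct rationals in I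
  obtain ⟨x, hx⟩ := hInonempty
  obtain ⟨ε, hε, hball⟩ := Metric.isOpen_iff.mp hIopen x hx
  have hmem : ∀ q : ℚ, x - ε < (q:ℝ) → (q:ℝ) < x → (q:ℝ) ∈ I := by
    intro q h1 h2
    apply hball
    rw [Metric.mem_ball, Real.dist_eq, abs_sub_lt_iff]
    constructor <;> linarith
  obtain ⟨q0, hq0a, hq0b⟩ := exists_rat_btwn (show x - ε < x by linarith)
  obtain ⟨q1, hq1a, hq1b⟩ := exists_rat_btwn hq0b
  obtain ⟨q2, hq2a, hq2b⟩ := exists_rat_btwn hq1b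
  obtain ⟨q3, hq3a, hq3b⟩ := exists_rat_btwn hq2b
  obtain ⟨q4, hq4a, hq4b⟩ := exists_rat_btwn hq3b
  have m0 : (q0:ℝ) ∈ I := hmem q0 hq0a hq0b
  have m1 : (q1:ℝ) ∈ I := hmem q1 (by linarith) hq1b
  have m2 : (q2:ℝ) ∈ I := hmem q2 (by linarith) hq2b
  have m3 : (q3:ℝ) ∈ I := hmem q3 (by linarith) hq3b
  have m4 : (q4:ℝ) ∈ I := hmem q4 (by linarith) hq4b
  -- P*Q has 5 roots and degree ≤ 4, so it is zero
  have hPQ : P * Q = 0 := by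
    apply eq_zero_of_natDegree_lt_card_of_eval_eq_zero (P*Q)
      (inj5 hq1a hq2a hq3a hq4a)
    · intro i
      fin_cases i
      exacts [key q0 m0, key q1 m1, key q2 m2, key q3 m3, key q4 m4]
    · have h4 : (P*Q).natDegree ≤ 4 := by
        rw [hP, hQ]; compute_degree
      calc (P*Q).natDegree ≤ 4 := h4
        _ < 5 := by norm_num
        _ = Fintype.card (Fin 5) := by simp
  rcases mul_eq_zero.mp hPQ with h | h
  · left
    have h0 : (c:ℝ) = 0 := by
      have := congrArg (fun p => Polynomial.coeff p 0) h
      simpa [hP, coeff_add, coeff_sub, coeff_C_mul, coeff_X, coeff_X_pow, coeff_C, coeff_intCast'] using this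
    have h1 : (d:ℝ) - a = 0 := by
      have := congrArg (fun p => Polynomial.coeff p 1) h
      simpa [hP, coeff_add, coeff_sub, coeff_C_mul, coeff_X, coeff_X_pow, coeff_C, coeff_intCast'] using this
    have h2 : (b:ℝ) = 0 := by
      have := congrArg (fun p => Polynomial.coeff p 2) h
      simpa [hP, coeff_add, coeff_sub, coeff_C_mul, coeff_X, coeff_X_pow, coeff_C, coeff_intCast'] using this
    refine ⟨by exact_mod_cast h0, by exact_mod_cast h2, ?_⟩
    have : (a:ℝ) = d := by linarith
    exact_mod_cast this
  · right
    have h0 : (a:ℝ) = 0 := by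
      have := congrArg (fun p => Polynomial.coeff p 0) h
      simpa [hQ, coeff_add, coeff_sub, coeff_C_mul, coeff_X, coeff_X_pow, coeff_C, coeff_intCast'] using this
    have h1 : (b:ℝ) - c = 0 := by
      have := congrArg (fun p => Polynomial.coeff p 1) h
      simpa [hQ, coeff_add, coeff_sub, coeff_C_mul, coeff_X, coeff_X_pow, coeff_C, coeff_intCast'] using this
    have h2 : (d:ℝ) = 0 := by
      have := congrArg (fun p => Polynomial.coeff p 2) h
      simpa [hQ, coeff_add, coeff_sub, coeff_C_mul, coeff_X, coeff_X_pow, coeff_C, coeff_intCast'] using this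
    refine ⟨by exact_mod_cast h0, by exact_mod_cast h2, ?_⟩
    have : (c:ℝ) = b := by linarith
    exact_mod_cast this
end

section
/- Fix an irrational λ > 0 and positive integers m, n. Define f on the closed unit polydisk by f(0,0) = (0,0) and f(tᵐη, tⁿξ) = (tη, t^λ ξ) for t ∈ (0,1], (η,ξ) ∈ ∂(D×D). Then f is a well-defined homeomorphism of the closed unit polydisk onto itself, f restricts to the identity on ∂(D×D), and f maps {(x,y) : |y| = |x|^{n/m}, |x| ≤ 1} onto {(x,y) : |y| = |x|^λ, |x| ≤ 1}. -/
/-!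
A nonzero point `p` of `ℂ²` is `(tᵐ η, tⁿ ξ)` with `max ‖η‖ ‖ξ‖ = 1` for exactly one `t > 0`,
namely the quasi-radius `ρ(p) = max (‖x‖^(1/m), ‖y‖^(1/n))`; the map is
`p ↦ (ρ^(1-m) x, ρ^(λ-n) y)`. It sends a point of `(m, n)`-quasi-radius `ρ` to one of
`(1, λ)`-quasi-radius `ρ`, so the same formula with the exponent pairs swapped inverts it, and
`‖f p‖ ≤ max (ρ, ρ^λ)` gives continuity at the origin. The curve `|y| = |x|^(n/m)` is where both
coordinates attain the quasi-radius, `‖x‖ = ρᵐ`, `‖y‖ = ρⁿ`, and these become `‖x‖ = ρ`,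
`‖y‖ = ρ^λ`.
-/

open Complex

/-- The closed unit polydisk in `ℂ²`. -/
def polydisk : Set (ℂ × ℂ) := {p | ‖p.1‖ ≤ 1 ∧ ‖p.2‖ ≤ 1}

section Reweight

variable {E F : Type*} [NormedAddCommGroup E] [NormedAddCommGroup F]

/-- The quasi-homogeneous radius for the dilations `(x, y) ↦ (tᵃ x, tᵇ y)`: for `p ≠ 0` it is the
unique `t > 0` with `max (‖p.1‖ / tᵃ) (‖p.2‖ / tᵇ) = 1`, i.e. the `t` in `p = (tᵃ η, tᵇ ξ)` with
`max ‖η‖ ‖ξ‖ = 1`. -/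
noncomputable def quasiRadius (a b : ℝ) (p : E × F) : ℝ :=
  max (‖p.1‖ ^ a⁻¹) (‖p.2‖ ^ b⁻¹)

variable {a b c d : ℝ}

lemma quasiRadius_nonneg (a b : ℝ) (p : E × F) : 0 ≤ quasiRadius a b p :=
  (Real.rpow_nonneg (norm_nonneg _) _).trans (le_max_left _ _)

@[simp]
lemma quasiRadius_zero (ha : 0 < a) (hb : 0 < b) : quasiRadius a b (0 : E × F) = 0 := by
  simp [quasiRadius, Real.zero_rpow (inv_pos.2 ha).ne', Real.zero_rpow (inv_pos.2 hb).ne']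

lemma continuous_quasiRadius (ha : 0 < a) (hb : 0 < b) :
    Continuous (quasiRadius a b : E × F → ℝ) :=
  ((Real.continuous_rpow_const (inv_pos.2 ha).le).comp (continuous_norm.comp continuous_fst)).max
    ((Real.continuous_rpow_const (inv_pos.2 hb).le).comp (continuous_norm.comp continuous_snd))

lemma norm_fst_le_quasiRadius_rpow (ha : 0 < a) (b : ℝ) (p : E × F) :
    ‖p.1‖ ≤ quasiRadius a b p ^ a :=
  (Real.rpow_inv_le_iff_of_pos (norm_nonneg _) (quasiRadius_nonneg a b p) ha).1 (le_max_left _ _)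

lemma norm_snd_le_quasiRadius_rpow (a : ℝ) (hb : 0 < b) (p : E × F) :
    ‖p.2‖ ≤ quasiRadius a b p ^ b :=
  (Real.rpow_inv_le_iff_of_pos (norm_nonneg _) (quasiRadius_nonneg a b p) hb).1 (le_max_right _ _)

lemma quasiRadius_eq_zero_iff (ha : 0 < a) (hb : 0 < b) {p : E × F} :
    quasiRadius a b p = 0 ↔ p = 0 := by
  refine ⟨fun h => ?_, fun h => h ▸ quasiRadius_zero ha hb⟩
  have h1 := norm_fst_le_quasiRadius_rpow ha b p
  have h2 := norm_snd_le_quasiRadius_rpow a hb p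
  rw [h, Real.zero_rpow ha.ne'] at h1
  rw [h, Real.zero_rpow hb.ne'] at h2
  exact Prod.ext (norm_le_zero_iff.1 h1) (norm_le_zero_iff.1 h2)

lemma quasiRadius_le_one_iff (ha : 0 < a) (hb : 0 < b) {p : E × F} :
    quasiRadius a b p ≤ 1 ↔ ‖p.1‖ ≤ 1 ∧ ‖p.2‖ ≤ 1 := by
  simp only [quasiRadius, max_le_iff,
    Real.rpow_inv_le_iff_of_pos (norm_nonneg _) zero_le_one ha,
    Real.rpow_inv_le_iff_of_pos (norm_nonneg _) zero_le_one hb, Real.one_rpow]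

private lemma rpow_inv_le_iff_div_le_one {x t a : ℝ} (hx : 0 ≤ x) (ht : 0 < t) (ha : 0 < a) :
    x ^ a⁻¹ ≤ t ↔ x / t ^ a ≤ 1 := by
  rw [Real.rpow_inv_le_iff_of_pos hx ht.le ha, div_le_one (Real.rpow_pos_of_pos ht a)]

private lemma le_rpow_inv_iff_one_le_div {x t a : ℝ} (hx : 0 ≤ x) (ht : 0 < t) (ha : 0 < a) :
    t ≤ x ^ a⁻¹ ↔ 1 ≤ x / t ^ a := by
  rw [Real.le_rpow_inv_iff_of_pos ht.le hx ha, one_le_div (Real.rpow_pos_of_pos ht a)]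

lemma quasiRadius_eq_iff (ha : 0 < a) (hb : 0 < b) {t : ℝ} (ht : 0 < t) {p : E × F} :
    quasiRadius a b p = t ↔ max (‖p.1‖ / t ^ a) (‖p.2‖ / t ^ b) = 1 := by
  simp only [le_antisymm_iff, quasiRadius, max_le_iff, le_max_iff,
    rpow_inv_le_iff_div_le_one (norm_nonneg _) ht ha,
    rpow_inv_le_iff_div_le_one (norm_nonneg _) ht hb,
    le_rpow_inv_iff_one_le_div (norm_nonneg _) ht ha,
    le_rpow_inv_iff_one_le_div (norm_nonneg _) ht hb]

lemma quasiRadius_eq_one_of_max_norm_eq_one (ha : 0 < a) (hb : 0 < b) {p : E × F}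
    (hp : max ‖p.1‖ ‖p.2‖ = 1) : quasiRadius a b p = 1 :=
  (quasiRadius_eq_iff ha hb one_pos).2 (by simpa using hp)

def powerCurve (r : ℝ) : Set (E × F) := {p | ‖p.2‖ = ‖p.1‖ ^ r}

lemma mem_powerCurve_div_iff (ha : 0 < a) (hb : 0 < b) {p : E × F} :
    p ∈ powerCurve (b / a) ↔
      ‖p.1‖ = quasiRadius a b p ^ a ∧ ‖p.2‖ = quasiRadius a b p ^ b := by
  constructor
  · intro h
    have hroots : ‖p.2‖ ^ b⁻¹ = ‖p.1‖ ^ a⁻¹ := by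
      rw [h, ← Real.rpow_mul (norm_nonneg _)]
      congr 1
      field_simp
    have hρ : quasiRadius a b p = ‖p.1‖ ^ a⁻¹ := by rw [quasiRadius, hroots, max_self]
    rw [hρ, Real.rpow_inv_rpow (norm_nonneg _) ha.ne', ← hroots,
      Real.rpow_inv_rpow (norm_nonneg _) hb.ne']
    exact ⟨rfl, rfl⟩
  · rintro ⟨h1, h2⟩
    rw [powerCurve, Set.mem_ofPred_eq, h1, h2, ← Real.rpow_mul (quasiRadius_nonneg a b p),
      mul_div_cancel₀ _ ha.ne']

variable [NormedSpace ℝ E] [NormedSpace ℝ F]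

/-- Sends `(tᵃ η, tᵇ ξ)` to `(tᶜ η, tᵈ ξ)`, where `t` is the quasi-radius of the point. -/
noncomputable def reweight (a b c d : ℝ) (p : E × F) : E × F :=
  (quasiRadius a b p ^ (c - a) • p.1, quasiRadius a b p ^ (d - b) • p.2)

lemma quasiRadius_smul_rpow (ha : 0 < a) (hb : 0 < b) {t : ℝ} (ht : 0 < t) {η : E} {ξ : F}
    (hηξ : max ‖η‖ ‖ξ‖ = 1) : quasiRadius a b (t ^ a • η, t ^ b • ξ) = t := by
  have hta := Real.rpow_pos_of_pos ht a
  have htb := Real.rpow_pos_of_pos ht b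
  rw [quasiRadius_eq_iff ha hb ht]
  simpa [norm_smul, abs_of_pos hta, abs_of_pos htb, hta.ne', htb.ne'] using hηξ

lemma norm_reweight_fst (a b c d : ℝ) (p : E × F) :
    ‖(reweight a b c d p).1‖ = quasiRadius a b p ^ (c - a) * ‖p.1‖ := by
  rw [reweight, norm_smul, Real.norm_of_nonneg (Real.rpow_nonneg (quasiRadius_nonneg a b p) _)]

lemma norm_reweight_snd (a b c d : ℝ) (p : E × F) :
    ‖(reweight a b c d p).2‖ = quasiRadius a b p ^ (d - b) * ‖p.2‖ := by
  rw [reweight, norm_smul, Real.norm_of_nonneg (Real.rpow_nonneg (quasiRadius_nonneg a b p) _)]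

@[simp]
lemma reweight_zero (a b c d : ℝ) : reweight a b c d (0 : E × F) = 0 := by
  simp [reweight]

lemma quasiRadius_reweight (ha : 0 < a) (hb : 0 < b) (hc : 0 < c) (hd : 0 < d) (p : E × F) :
    quasiRadius c d (reweight a b c d p) = quasiRadius a b p := by
  rcases (quasiRadius_nonneg a b p).eq_or_lt with h0 | hpos
  · rw [← h0, (quasiRadius_eq_zero_iff ha hb).1 h0.symm, reweight_zero, quasiRadius_zero hc hd]
  set t := quasiRadius a b p
  have hdiv : ∀ {e f : ℝ} {x : ℝ}, t ^ (f - e) * x / t ^ f = x / t ^ e := fun {e f x} => by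
    rw [Real.rpow_sub hpos]
    field_simp
  rw [quasiRadius_eq_iff hc hd hpos, norm_reweight_fst, norm_reweight_snd, hdiv, hdiv,
    ← quasiRadius_eq_iff ha hb hpos]

lemma reweight_reweight (ha : 0 < a) (hb : 0 < b) (hc : 0 < c) (hd : 0 < d) (p : E × F) :
    reweight c d a b (reweight a b c d p) = p := by
  rcases (quasiRadius_nonneg a b p).eq_or_lt with h0 | hpos
  · rw [(quasiRadius_eq_zero_iff ha hb).1 h0.symm, reweight_zero, reweight_zero]
  have cancel : ∀ e f : ℝ, quasiRadius a b p ^ (e - f) * quasiRadius a b p ^ (f - e) = 1 :=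
    fun e f => by rw [← Real.rpow_add hpos, sub_add_sub_cancel, sub_self, Real.rpow_zero]
  rw [reweight, quasiRadius_reweight ha hb hc hd]
  simp only [reweight, smul_smul, cancel, one_smul]

lemma reweight_of_max_norm_eq_one (ha : 0 < a) (hb : 0 < b) (c d : ℝ) {p : E × F}
    (hp : max ‖p.1‖ ‖p.2‖ = 1) : reweight a b c d p = p := by
  simp [reweight, quasiRadius_eq_one_of_max_norm_eq_one ha hb hp]

lemma reweight_smul_rpow (ha : 0 < a) (hb : 0 < b) (c d : ℝ) {t : ℝ} (ht : 0 < t)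
    {η : E} {ξ : F} (hηξ : max ‖η‖ ‖ξ‖ = 1) :
    reweight a b c d (t ^ a • η, t ^ b • ξ) = (t ^ c • η, t ^ d • ξ) := by
  simp only [reweight, quasiRadius_smul_rpow ha hb ht hηξ, smul_smul, ← Real.rpow_add ht,
    sub_add_cancel]

lemma continuous_reweight (ha : 0 < a) (hb : 0 < b) (hc : 0 < c) (hd : 0 < d) :
    Continuous (reweight a b c d : E × F → E × F) := by
  have hρ := continuous_quasiRadius (E := E) (F := F) ha hb
  refine continuous_iff_continuousAt.2 fun p => ?_
  rcases (quasiRadius_nonneg a b p).eq_or_lt with h0 | hpos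
  · -- near the origin `‖reweight p‖ ≤ max (ρᶜ) (ρᵈ)`, which tends to `0`
    obtain rfl := (quasiRadius_eq_zero_iff ha hb).1 h0.symm
    have hbound :
        Continuous fun q : E × F => max (quasiRadius a b q ^ c) (quasiRadius a b q ^ d) :=
      ((Real.continuous_rpow_const hc.le).comp hρ).max ((Real.continuous_rpow_const hd.le).comp hρ)
    have hlim := hbound.tendsto 0
    rw [quasiRadius_zero ha hb, Real.zero_rpow hc.ne', Real.zero_rpow hd.ne', max_self] at hlim
    rw [ContinuousAt, reweight_zero]
    refine squeeze_zero_norm (fun q => ?_) hlim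
    rw [Prod.norm_def, ← quasiRadius_reweight ha hb hc hd]
    exact max_le_max (norm_fst_le_quasiRadius_rpow hc d _) (norm_snd_le_quasiRadius_rpow c hd _)
  · have hpow : ∀ e : ℝ, ContinuousAt (fun q : E × F => quasiRadius a b q ^ e) p := fun e =>
      (Real.continuousAt_rpow_const _ _ (Or.inl hpos.ne')).comp hρ.continuousAt
    exact ((hpow _).smul continuous_fst.continuousAt).prodMk
      ((hpow _).smul continuous_snd.continuousAt)

noncomputable def reweightHomeomorph (ha : 0 < a) (hb : 0 < b) (hc : 0 < c) (hd : 0 < d) :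
    (E × F) ≃ₜ (E × F) where
  toFun := reweight a b c d
  invFun := reweight c d a b
  left_inv := reweight_reweight ha hb hc hd
  right_inv := reweight_reweight hc hd ha hb
  continuous_toFun := continuous_reweight ha hb hc hd
  continuous_invFun := continuous_reweight hc hd ha hb

lemma mapsTo_reweight_powerCurve (ha : 0 < a) (hb : 0 < b) (hc : 0 < c) (hd : 0 < d) :
    Set.MapsTo (reweight a b c d : E × F → E × F) (powerCurve (b / a)) (powerCurve (d / c)) := by
  intro p hp
  obtain ⟨h1, h2⟩ := (mem_powerCurve_div_iff ha hb).1 hp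
  have hρ := quasiRadius_nonneg a b p
  rw [mem_powerCurve_div_iff hc hd, quasiRadius_reweight ha hb hc hd, norm_reweight_fst,
    norm_reweight_snd, h1, h2, ← Real.rpow_add' hρ (by simpa using hc.ne'),
    ← Real.rpow_add' hρ (by simpa using hd.ne'), sub_add_cancel, sub_add_cancel]
  exact ⟨rfl, rfl⟩

end Reweight

theorem stmt12_general (lam : ℝ) (hlampos : 0 < lam)
    (m n : ℕ) (hm : 0 < m) (hn : 0 < n) :
    ∃ f : polydisk ≃ₜ polydisk,
      (∀ p : polydisk, p.val = ((0 : ℂ), (0 : ℂ)) → (f p).val = ((0 : ℂ), (0 : ℂ))) ∧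
      (∀ (p q : polydisk) (t : ℝ) (η ξ : ℂ), t ∈ Set.Ioc (0 : ℝ) 1 →
        max (‖η‖) (‖ξ‖) = 1 →
        p.val = ((t : ℂ) ^ m * η, (t : ℂ) ^ n * ξ) →
        q.val = ((t : ℂ) * η, ((t ^ lam : ℝ) : ℂ) * ξ) →
        f p = q) ∧
      (∀ p : polydisk, max (‖p.val.1‖) (‖p.val.2‖) = 1 → f p = p) ∧
      (f '' {p : polydisk | ‖p.val.2‖ =
          ‖p.val.1‖ ^ ((n : ℝ) / (m : ℝ))} =
        {p : polydisk | ‖p.val.2‖ = ‖p.val.1‖ ^ lam}) := by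
  have hm' : (0 : ℝ) < m := Nat.cast_pos.2 hm
  have hn' : (0 : ℝ) < n := Nat.cast_pos.2 hn
  let H : (ℂ × ℂ) ≃ₜ (ℂ × ℂ) := reweightHomeomorph hm' hn' one_pos hlampos
  have hH : ∀ p, p ∈ polydisk ↔ H p ∈ polydisk := fun p => by
    show ‖p.1‖ ≤ 1 ∧ ‖p.2‖ ≤ 1 ↔
      ‖(reweight (m : ℝ) n 1 lam p).1‖ ≤ 1 ∧ ‖(reweight (m : ℝ) n 1 lam p).2‖ ≤ 1
    rw [← quasiRadius_le_one_iff hm' hn', ← quasiRadius_le_one_iff one_pos hlampos,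
      quasiRadius_reweight hm' hn' one_pos hlampos]
  let f : polydisk ≃ₜ polydisk := H.subtype hH
  refine ⟨f, fun p hp => ?_, fun p q t η ξ ht hηξ hp hq => ?_, fun p hp => ?_, ?_⟩
  · show reweight _ _ _ _ p.val = 0
    rw [hp, Prod.zero_eq_mk.symm, reweight_zero]
  · refine Subtype.ext ?_
    show reweight _ _ _ _ p.val = q.val
    rw [hp, hq]
    simpa [real_smul, Real.rpow_natCast] using reweight_smul_rpow hm' hn' 1 lam ht.1 hηξ
  · exact Subtype.ext (reweight_of_max_norm_eq_one hm' hn' 1 lam hp)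
  · refine Set.SurjOn.image_eq_of_mapsTo
      (Set.RightInvOn.surjOn (f' := f.symm) (fun q _ => f.apply_symm_apply q) fun q hq => ?_)
      fun p hp => ?_
    · exact mapsTo_reweight_powerCurve one_pos hlampos hm' hn' (by rwa [div_one])
    · exact div_one lam ▸ mapsTo_reweight_powerCurve hm' hn' one_pos hlampos hp

/-- The map `f(tᵐη, tⁿξ) = (tη, t^λ ξ)`, `f(0,0) = (0,0)`, is a well-defined
homeomorphism of the closed unit polydisk onto itself, is the identity on the
distinguished boundary, and maps `{|y| = |x|^{n/m}}` onto `{|y| = |x|^λ}`. -/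
theorem stmt12 (lam : ℝ) (hlam : Irrational lam) (hlampos : 0 < lam)
    (m n : ℕ) (hm : 0 < m) (hn : 0 < n) :
    ∃ f : polydisk ≃ₜ polydisk,
      (∀ p : polydisk, p.val = ((0 : ℂ), (0 : ℂ)) → (f p).val = ((0 : ℂ), (0 : ℂ))) ∧
      (∀ (p q : polydisk) (t : ℝ) (η ξ : ℂ), t ∈ Set.Ioc (0 : ℝ) 1 →
        max (‖η‖) (‖ξ‖) = 1 →
        p.val = ((t : ℂ) ^ m * η, (t : ℂ) ^ n * ξ) →
        q.val = ((t : ℂ) * η, ((t ^ lam : ℝ) : ℂ) * ξ) →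
        f p = q) ∧
      (∀ p : polydisk, max (‖p.val.1‖) (‖p.val.2‖) = 1 → f p = p) ∧
      (f '' {p : polydisk | ‖p.val.2‖ =
          ‖p.val.1‖ ^ ((n : ℝ) / (m : ℝ))} =
        {p : polydisk | ‖p.val.2‖ = ‖p.val.1‖ ^ lam}) :=
  stmt12_general lam hlampos m n hm hn
end
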